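/- arXiv:2502.02841 — 4 statements merged into one kernel-verified Lean document; each statement's English description precedes it below -/
import Mathlib

section
/- Let i ≤ j and k be integers. Then ∑_{t=i}^{j} h_{t−i}(α_{t−k}, α_{t−k+1}, …, α_i) · e_{j−t}(−α_{t−k+1}, …, −α_{j−1}) equals 1 if i = j and equals 0 if i < j. (Here the h-factor uses the list of α's with indices from t−k up to i, which is empty if t−k > i, and the e-factor uses the list of −α's with indices from t−k+1 up to j−1.) -/
variable {R : Type*} [CommRing R]

/-- Elementary symmetric polynomial `e_m` of the entries of a list (zero for `m < 0`). -/
def esymL (l : List R) (m : ℤ) : R :=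
  if 0 ≤ m then
    ∑ s ∈ Finset.powersetCard m.toNat (Finset.univ : Finset (Fin l.length)), ∏ i ∈ s, l.get i
  else 0

/-- Complete homogeneous symmetric polynomial `h_m` of the entries of a list (zero for `m < 0`). -/
def hsymL (l : List R) (m : ℤ) : R :=
  if 0 ≤ m then
    ∑ s ∈ (Finset.univ : Finset (Fin l.length)).sym m.toNat, ((s.1).map l.get).prod
  else 0

/-- The list `f a, f (a+1), …, f b` (empty if `b < a`). -/
def intList (f : ℤ → R) (a b : ℤ) : List R :=
  (List.range (b + 1 - a).toNat).map (fun p => f (a + (p : ℤ)))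

/-- `e_m(f a, …, f b)`. -/
def eI (f : ℤ → R) (a b m : ℤ) : R := esymL (intList f a b) m

/-- `h_m(f a, …, f b)`. -/
def hI (f : ℤ → R) (a b m : ℤ) : R := hsymL (intList f a b) m

/-!
Write `S k` for the sum. Expanding the `h`-factor along its first variable `α (t - k)` and the
`e`-factor along its first variable `-α (t - k + 1)` writes each term of `S k` as the
corresponding term of `S (k - 1)` plus a difference `D t - D (t + 1)`, where `D i = 0` (a negative
`h`-degree) and `D (j + 1) = 0` (a negative `e`-degree); hence `S k = S (k - 1)` for `k > 0`. For
`k ≤ 0` and `i < j` every term vanishes: for `t > i` the `h`-factor has positive degree in no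
variables, and for `t = i` the `e`-factor has degree `j - i` in fewer than `j - i` variables.
-/

open Finset MvPolynomial

theorem Multiset.esymm_cons_succ {S : Type*} [CommSemiring S] (x : S) (s : Multiset S) (n : ℕ) :
    (x ::ₘ s).esymm (n + 1) = s.esymm (n + 1) + x * s.esymm n := by
  simp only [Multiset.esymm, Multiset.powersetCard_cons, Multiset.map_add, Multiset.sum_add,
    Multiset.map_map, Function.comp_def, Multiset.prod_cons, Multiset.sum_map_mul_left]

theorem MvPolynomial.hsymm_option_succ {σ S : Type*} [CommSemiring S] [Fintype σ]
    [DecidableEq σ] (n : ℕ) :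
    hsymm (Option σ) S (n + 1) =
      X none * hsymm (Option σ) S n + rename some (hsymm σ S (n + 1)) := by
  simp only [hsymm, ← (symOptionSuccEquiv (α := σ) (n := n)).symm.sum_comp,
    Fintype.sum_sum_type, map_sum]
  simp [symOptionSuccEquiv, Finset.mul_sum, Multiset.map_map, Sym.coe_cons, map_multiset_prod]

theorem MvPolynomial.hsymm_fin_succ {S : Type*} [CommSemiring S] (N n : ℕ) :
    hsymm (Fin (N + 1)) S (n + 1) =
      X 0 * hsymm (Fin (N + 1)) S n + rename Fin.succ (hsymm (Fin N) S (n + 1)) := by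
  rw [← rename_hsymm _ _ _ (_root_.finSuccEquiv N).symm, hsymm_option_succ, map_add, map_mul,
    rename_X, rename_hsymm, rename_rename]
  simp [Function.comp_def]

section ListSymm

variable (l : List R)

theorem esymL_of_neg {m : ℤ} (hm : m < 0) : esymL l m = 0 := by
  simp [esymL, hm.not_ge]

theorem esymL_zero : esymL l 0 = 1 := by
  simp [esymL]

theorem esymL_natCast (n : ℕ) : esymL l n = (l : Multiset R).esymm n := by
  simp [esymL, ← Finset.esymm_map_val, Fin.univ_val_map]

theorem esymL_cons (x : R) (m : ℤ) : esymL (x :: l) m = esymL l m + x * esymL l (m - 1) := by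
  obtain hm | rfl | hm := lt_trichotomy m 0
  · simp [esymL_of_neg _ hm, esymL_of_neg _ (show m - 1 < 0 by omega)]
  · simp [esymL_zero, esymL_of_neg]
  · obtain ⟨n, rfl⟩ : ∃ n : ℕ, m = (n + 1 : ℕ) := ⟨(m - 1).toNat, by omega⟩
    rw [Nat.cast_add_one, add_sub_cancel_right, ← Nat.cast_add_one, esymL_natCast, esymL_natCast,
      esymL_natCast]
    exact Multiset.esymm_cons_succ x l n

theorem esymL_of_length_lt {m : ℤ} (hm : l.length < m) : esymL l m = 0 := by
  lift m to ℕ using by omega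
  rw [esymL_natCast, Multiset.esymm, Multiset.powersetCard_eq_empty _ (by simpa using hm)]
  simp

theorem hsymL_of_neg {m : ℤ} (hm : m < 0) : hsymL l m = 0 := by
  simp [hsymL, hm.not_ge]

theorem hsymL_natCast (n : ℕ) : hsymL l n = aeval l.get (hsymm (Fin l.length) R n) := by
  simp [hsymL, hsymm, map_multiset_prod, Multiset.map_map, Finset.sym_univ]

theorem hsymL_zero : hsymL l 0 = 1 := by
  simpa [hsymm_zero] using hsymL_natCast l 0

theorem hsymL_nil {m : ℤ} (hm : m ≠ 0) : hsymL ([] : List R) m = 0 := by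
  obtain hm | hm := hm.lt_or_gt
  · exact hsymL_of_neg _ hm
  · lift m to ℕ using hm.le
    obtain ⟨n, rfl⟩ := Nat.exists_eq_add_one.mpr (by omega : 0 < m)
    rw [hsymL_natCast]
    simp [hsymm]

theorem hsymL_cons (x : R) (m : ℤ) :
    hsymL (x :: l) m = hsymL l m + x * hsymL (x :: l) (m - 1) := by
  obtain hm | rfl | hm := lt_trichotomy m 0
  · simp [hsymL_of_neg _ hm, hsymL_of_neg _ (show m - 1 < 0 by omega)]
  · simp [hsymL_zero, hsymL_of_neg]
  · obtain ⟨n, rfl⟩ : ∃ n : ℕ, m = (n + 1 : ℕ) := ⟨(m - 1).toNat, by omega⟩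
    rw [Nat.cast_add_one, add_sub_cancel_right, ← Nat.cast_add_one, hsymL_natCast, hsymL_natCast,
      hsymL_natCast]
    -- `Fin (x :: l).length` is `Fin (l.length + 1)` only after unfolding `List.length`
    erw [hsymm_fin_succ]
    rw [map_add, map_mul, aeval_X, aeval_rename, add_comm]
    rfl

end ListSymm

section IntList

variable {M : Type*} (f : ℤ → M)

theorem intList_eq_map_range (a b : ℤ) :
    intList f a b = (List.range (b + 1 - a).toNat).map fun p : ℕ => f (a + p) :=
  (congrArg (List.map _) (List.flatMap_pure_eq_map Nat.cast _)).trans (List.map_map ..)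

theorem intList_eq_nil {a b : ℤ} (h : b < a) : intList f a b = [] := by
  simp [intList_eq_map_range]
  omega

theorem intList_eq_cons {a b : ℤ} (h : a ≤ b) : intList f a b = f a :: intList f (a + 1) b := by
  obtain ⟨n, hn⟩ : ∃ n : ℕ, (b + 1 - a).toNat = n + 1 := ⟨(b - a).toNat, by omega⟩
  have hn' : (b - a).toNat = n := by omega
  simp [intList_eq_map_range, hn, hn', List.range_succ_eq_map, Function.comp_def, add_assoc,
    add_comm (1 : ℤ)]

theorem length_intList (a b : ℤ) : (intList f a b).length = (b + 1 - a).toNat := by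
  simp [intList_eq_map_range]

end IntList

theorem Int.sum_Icc_sub_add_one {M : Type*} [AddCommGroup M] (f : ℤ → M) {a b : ℤ}
    (hab : a ≤ b) :
    ∑ t ∈ Icc a b, (f t - f (t + 1)) = f a - f (b + 1) := by
  induction b, hab using Int.leInduction with
  | base => simp
  | succ b hab ih =>
    rw [← Order.succ_eq_add_one, ← insert_Icc_right_eq_Icc_succ (by simp; omega),
      sum_insert (by simp), Order.succ_eq_add_one, ih]
    abel

section IntervalSymm

variable (f : ℤ → R) {a b m : ℤ}

theorem eI_of_neg (hm : m < 0) : eI f a b m = 0 := esymL_of_neg _ hm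

theorem eI_zero : eI f a b 0 = 1 := esymL_zero _

theorem hI_of_neg (hm : m < 0) : hI f a b m = 0 := hsymL_of_neg _ hm

theorem hI_zero : hI f a b 0 = 1 := hsymL_zero _

theorem eI_eq_add_of_le (hab : a ≤ b) :
    eI f a b m = eI f (a + 1) b m + f a * eI f (a + 1) b (m - 1) := by
  rw [eI, intList_eq_cons f hab, esymL_cons, eI, eI]

theorem hI_eq_add_of_le (hab : a ≤ b) :
    hI f a b m = hI f (a + 1) b m + f a * hI f a b (m - 1) := by
  rw [hI, intList_eq_cons f hab, hsymL_cons, ← intList_eq_cons f hab, hI, hI]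

theorem eI_eq_zero_of_card_lt (hm : b + 1 - a < m) (hm₀ : 0 < m) : eI f a b m = 0 :=
  esymL_of_length_lt _ (by rw [length_intList]; omega)

theorem hI_eq_zero_of_lt (hab : b < a) (hm : m ≠ 0) : hI f a b m = 0 := by
  rw [hI, intList_eq_nil f hab, hsymL_nil hm]

end IntervalSymm

section HEIdentity

variable (α : ℤ → R) {i j k t : ℤ}

def hFactor (i k t : ℤ) : R := hI α (t - k) i (t - i)

def eFactor (j k t : ℤ) : R := eI (fun s => -α s) (t - k + 1) (j - 1) (j - t)

theorem hFactor_of_pos (hk : 0 < k) :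
    hFactor α i k t = hFactor α i (k - 1) t + α (t - k) * hFactor α i (k - 1) (t - 1) := by
  have e₁ : t - (k - 1) = t - k + 1 := by ring
  have e₂ : t - 1 - (k - 1) = t - k := by ring
  have e₃ : t - 1 - i = t - i - 1 := by ring
  simp only [hFactor, e₁, e₂, e₃]
  by_cases h : t - k ≤ i
  · exact hI_eq_add_of_le α h
  · simp [hI_eq_zero_of_lt α (show i < t - k by omega),
      hI_eq_zero_of_lt α (show i < t - k + 1 by omega),
      show t - i ≠ 0 by omega, show t - i - 1 ≠ 0 by omega]

theorem eFactor_of_pos (hk : 0 < k) :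
    eFactor α j k t = eFactor α j (k - 1) t - α (t - k + 1) * eFactor α j k (t + 1) := by
  have e₁ : t - (k - 1) + 1 = t - k + 1 + 1 := by ring
  have e₂ : t + 1 - k + 1 = t - k + 1 + 1 := by ring
  have e₃ : j - (t + 1) = j - t - 1 := by ring
  simp only [eFactor, e₁, e₂, e₃]
  by_cases h : t - k + 1 ≤ j - 1
  · rw [eI_eq_add_of_le _ h]
    ring
  · obtain rfl | hjt := (show j ≤ t by omega).eq_or_lt
    · rw [sub_self, eI_zero, eI_zero, eI_of_neg _ (show (0 : ℤ) - 1 < 0 by omega)]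
      ring
    · simp [eI_of_neg _ (show j - t < 0 by omega), eI_of_neg _ (show j - t - 1 < 0 by omega)]

theorem hFactor_mul_eFactor_of_pos (hk : 0 < k) :
    hFactor α i k t * eFactor α j k t = hFactor α i (k - 1) t * eFactor α j (k - 1) t +
      (α (t - k) * hFactor α i (k - 1) (t - 1) * eFactor α j k t -
        α (t + 1 - k) * hFactor α i (k - 1) (t + 1 - 1) * eFactor α j k (t + 1)) := by
  rw [add_sub_cancel_right, show t + 1 - k = t - k + 1 by ring, hFactor_of_pos α hk,
    eFactor_of_pos α hk]
  ring

theorem sum_hFactor_mul_eFactor_of_pos (hk : 0 < k) (hij : i ≤ j) :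
    ∑ t ∈ Icc i j, hFactor α i k t * eFactor α j k t =
      ∑ t ∈ Icc i j, hFactor α i (k - 1) t * eFactor α j (k - 1) t := by
  rw [sum_congr rfl fun t _ => hFactor_mul_eFactor_of_pos α hk, sum_add_distrib,
    Int.sum_Icc_sub_add_one
      (fun u => α (u - k) * hFactor α i (k - 1) (u - 1) * eFactor α j k u) hij]
  simp [hFactor, eFactor, hI_of_neg, eI_of_neg]

theorem hFactor_mul_eFactor_of_nonpos (hk : k ≤ 0) (hij : i < j) (hit : i ≤ t) :
    hFactor α i k t * eFactor α j k t = 0 := by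
  obtain rfl | hit := hit.eq_or_lt
  · rw [hFactor, sub_self, hI_zero, one_mul, eFactor,
      eI_eq_zero_of_card_lt _ (by omega) (by omega)]
  · rw [hFactor, hI_eq_zero_of_lt α (by omega) (by omega), zero_mul]

theorem sum_hFactor_mul_eFactor_of_lt (hij : i < j) (k : ℤ) :
    ∑ t ∈ Icc i j, hFactor α i k t * eFactor α j k t = 0 := by
  have of_nonpos {k : ℤ} (hk : k ≤ 0) :
      ∑ t ∈ Icc i j, hFactor α i k t * eFactor α j k t = 0 :=
    sum_eq_zero fun t ht => hFactor_mul_eFactor_of_nonpos α hk hij (mem_Icc.mp ht).1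
  induction k using Int.induction_on with
  | zero => exact of_nonpos le_rfl
  | succ n ih => rwa [sum_hFactor_mul_eFactor_of_pos α (by omega) hij.le, add_sub_cancel_right]
  | pred n _ => exact of_nonpos (by omega)

end HEIdentity

/-- Proposition 2.6: for i ≤ j,
∑_{t=i}^{j} h_{t−i}(α_{t−k},…,α_i) e_{j−t}(−α_{t−k+1},…,−α_{j−1}) = δ_{ij}. -/
theorem he_identity (α : ℤ → R) (i j k : ℤ) (hij : i ≤ j) :
    (∑ t ∈ Finset.Icc i j,
      hI α (t - k) i (t - i) * eI (fun s => -α s) (t - k + 1) (j - 1) (j - t))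
      = if i = j then 1 else 0 := by
  obtain rfl | hij := hij.eq_or_lt
  · simp [hI_zero, eI_zero]
  · rw [if_neg hij.ne]
    exact sum_hFactor_mul_eFactor_of_lt α hij k
end

section
/- For every integer k, the following two identities hold in R((z)): (1) (z^{−1}|σ^{−1}α)^k = (z^{−1}|α)^k + (α_k − α_0)·(z^{−1}|α)^{k−1}; and (2) ((z^{−1}|σα)^k)^{−1} = ((z^{−1}|α)^k)^{−1} + (α_{k+1} − α_1)·((z^{−1}|α)^{k+1})^{−1}. -/
/-! Both `(z⁻¹|σ⁻¹α)^k` and `(z⁻¹|α)^{k-1} (z⁻¹ - α₀)` equal `1` at `k = 0` and get multiplied by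
the unit `z⁻¹ - α_k` when passing from `k - 1` to `k`, so they agree for all `k ∈ ℤ`. Splitting
`z⁻¹ - α₀ = (z⁻¹ - α_k) + (α_k - α₀)` gives (1); the same factorisation for `σα` at `k + 1`,
inverted, gives (2). -/

variable {R : Type*} [CommRing R]

/-- The shifted power `(z⁻¹|α)^k` in the ring of formal Laurent series `R((z))`:
`∏_{i=1}^{k} (z⁻¹ − α_i)` for `k ≥ 0`, and `∏_{i=k+1}^{0} (z⁻¹ − α_i)⁻¹` for `k < 0`
(each factor `z⁻¹ − α_i = z⁻¹(1 − α_i z)` is a unit, so `Ring.inverse` gives its inverse). -/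
noncomputable def spow (α : ℤ → R) (k : ℤ) : LaurentSeries R :=
  if 0 ≤ k then
    ∏ i ∈ Finset.Icc 1 k, (HahnSeries.single (-1 : ℤ) (1 : R) - HahnSeries.C (α i))
  else
    ∏ i ∈ Finset.Icc (k + 1) 0,
      Ring.inverse (HahnSeries.single (-1 : ℤ) (1 : R) - HahnSeries.C (α i))

theorem eq_of_recurrence_mul_isUnit {M : Type*} [Monoid M] {u f g : ℤ → M}
    (hu : ∀ k, IsUnit (u k)) (hf : ∀ k, f (k + 1) = f k * u (k + 1))
    (hg : ∀ k, g (k + 1) = g k * u (k + 1)) (h0 : f 0 = g 0) : f = g := by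
  funext k
  induction k using Int.induction_on with
  | zero => exact h0
  | succ n ih => rw [hf, hg, ih]
  | pred n ih =>
    have hf' := hf (-n - 1)
    have hg' := hg (-n - 1)
    rw [sub_add_cancel] at hf' hg'
    exact (hu (-n)).mul_right_cancel (by rw [← hf', ← hg', ih])

theorem Ring.inverse_eq_mul_inverse_mul {M₀ : Type*} [CommMonoidWithZero M₀] (a : M₀) {u : M₀}
    (hu : IsUnit u) : Ring.inverse a = u * Ring.inverse (a * u) := by
  rw [Ring.mul_inverse_rev, ← mul_assoc, Ring.mul_inverse_cancel u hu, one_mul]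

namespace LaurentSeries

noncomputable def invXSubC (a : R) : LaurentSeries R :=
  HahnSeries.single (-1 : ℤ) (1 : R) - HahnSeries.C a

theorem isUnit_invXSubC (a : R) : IsUnit (invXSubC a) := by
  have hz : HahnSeries.single (1 : ℤ) (1 : R) * invXSubC a = 1 - HahnSeries.single 1 a := by
    rw [invXSubC, mul_sub, HahnSeries.single_mul_single, HahnSeries.C_apply,
      HahnSeries.single_mul_single]
    simp
  refine isUnit_of_mul_isUnit_right (x := HahnSeries.single (1 : ℤ) (1 : R)) ?_
  rw [hz]
  refine HahnSeries.isUnit_of_orderTop_pos ?_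
  rw [sub_sub_cancel_left, HahnSeries.orderTop_neg]
  exact lt_of_lt_of_le (by norm_num) HahnSeries.orderTop_single_le

theorem invXSubC_sub_invXSubC (a b : R) : invXSubC a - invXSubC b = HahnSeries.C (b - a) := by
  rw [invXSubC, invXSubC, map_sub]; ring

end LaurentSeries

open LaurentSeries

theorem spow_of_nonneg (α : ℤ → R) {k : ℤ} (hk : 0 ≤ k) :
    spow α k = ∏ i ∈ Finset.Icc 1 k, invXSubC (α i) := if_pos hk

theorem spow_of_nonpos (α : ℤ → R) {k : ℤ} (hk : k ≤ 0) :
    spow α k = ∏ i ∈ Finset.Icc (k + 1) 0, Ring.inverse (invXSubC (α i)) := by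
  rcases hk.lt_or_eq with hk | rfl
  · exact if_neg (not_le.2 hk)
  · simp [spow, invXSubC]

theorem spow_zero (α : ℤ → R) : spow α 0 = 1 := by
  simp [spow]

theorem spow_succ (α : ℤ → R) (k : ℤ) :
    spow α (k + 1) = spow α k * invXSubC (α (k + 1)) := by
  rcases lt_or_ge k 0 with hk | hk
  · rw [spow_of_nonpos α hk.le, spow_of_nonpos α (by omega),
      ← Finset.insert_Icc_add_one_left_eq_Icc (a := k + 1) (by omega),
      Finset.prod_insert (by simp), mul_right_comm,
      Ring.inverse_mul_cancel _ (isUnit_invXSubC _), one_mul]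
  · rw [spow_of_nonneg α hk, spow_of_nonneg α (by omega),
      ← Finset.insert_Icc_right_eq_Icc_add_one (by omega), Finset.prod_insert (by simp), mul_comm]

theorem spow_sub_one_mul (α : ℤ → R) (k : ℤ) :
    spow α (k - 1) * invXSubC (α k) = spow α k := by
  conv_rhs => rw [← sub_add_cancel k 1, spow_succ, sub_add_cancel]

theorem spow_shift (α : ℤ → R) (k : ℤ) :
    spow (fun i => α (i - 1)) k = spow α (k - 1) * invXSubC (α 0) := by
  refine congrFun (eq_of_recurrence_mul_isUnit (u := fun i => invXSubC (α (i - 1)))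
    (f := spow fun i => α (i - 1)) (g := fun j => spow α (j - 1) * invXSubC (α 0))
    (fun _ => isUnit_invXSubC _) (spow_succ _) ?_ ?_) k
  · intro j
    rw [add_sub_cancel_right, mul_right_comm, spow_sub_one_mul]
  · rw [spow_zero, zero_sub, ← zero_sub, spow_sub_one_mul, spow_zero]

/-- Proposition 2.2: for every k ∈ ℤ,
`(z⁻¹|σ⁻¹α)^k = (z⁻¹|α)^k + (α_k − α_0)(z⁻¹|α)^{k−1}` and
`((z⁻¹|σα)^k)⁻¹ = ((z⁻¹|α)^k)⁻¹ + (α_{k+1} − α_1)((z⁻¹|α)^{k+1})⁻¹`,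
where `(σ^s α)_i = α_{i+s}`. -/
theorem shifted_power_shift (α : ℤ → R) (k : ℤ) :
    spow (fun i => α (i - 1)) k
        = spow α k + HahnSeries.C (α k - α 0) * spow α (k - 1) ∧
      Ring.inverse (spow (fun i => α (i + 1)) k)
        = Ring.inverse (spow α k)
            + HahnSeries.C (α (k + 1) - α 1) * Ring.inverse (spow α (k + 1)) := by
  constructor
  · rw [spow_shift, ← add_sub_cancel (invXSubC (α k)) (invXSubC (α 0)), invXSubC_sub_invXSubC,
      mul_add, spow_sub_one_mul, mul_comm (spow α _)]
  · have hsucc : spow (fun i => α (i + 1)) k * invXSubC (α 1) = spow α (k + 1) := by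
      simpa only [sub_add_cancel, add_sub_cancel_right, zero_add] using
        (spow_shift (fun i => α (i + 1)) (k + 1)).symm
    rw [Ring.inverse_eq_mul_inverse_mul _ (isUnit_invXSubC (α 1)), hsucc,
      ← add_sub_cancel (invXSubC (α (k + 1))) (invXSubC (α 1)), invXSubC_sub_invXSubC, add_mul,
      Ring.inverse_eq_mul_inverse_mul (spow α k) (isUnit_invXSubC (α (k + 1))), spow_succ]
end

section
/- For all integers n and k, the coefficient of z^1 in the formal Laurent series (z^{−1}|σ^k α)^{n−k−1} ∈ R((z)) equals 1 if n = k and equals 0 if n ≠ k. (Equivalently, in the notation of formal contour integrals, ∮ (z^{−1}|σ^k α)^{n−k−1} dz/(2πi z²) = δ_{nk}.) -/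
variable {R : Type*} [CommRing R]

/-! For `m ≥ 0` the shifted power `(z⁻¹|β)^m` is a polynomial in `z⁻¹`, so it has no `z¹` term.
For `m < 0` each factor `(z⁻¹ − a)⁻¹ = z · (1 − a z)⁻¹` is `z` times a power series with constant
term `1`, so `(z⁻¹|β)^m = z^{-m} · u` with `u(0) = 1`, whose `z¹` coefficient is `1` exactly when
`m = -1`. The theorem is the case `m = n − k − 1`. -/

open HahnSeries

theorem HahnSeries.coeff_mul_eq_zero_of_forall_pos {Γ A : Type*} [AddCommMonoid Γ] [LinearOrder Γ]
    [IsOrderedCancelAddMonoid Γ] [NonUnitalNonAssocSemiring A] {x y : HahnSeries Γ A}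
    (hx : ∀ g, 0 < g → x.coeff g = 0) (hy : ∀ g, 0 < g → y.coeff g = 0) {g : Γ} (hg : 0 < g) :
    (x * y).coeff g = 0 := by
  by_contra h
  obtain ⟨a, ha, b, hb, rfl⟩ := support_mul_subset (mem_support _ _ |>.mpr h)
  exact hg.not_ge <| add_nonpos (not_lt.mp fun h => ha (hx a h)) (not_lt.mp fun h => hb (hy b h))

theorem coeff_prod_single_neg_one_sub_C_of_pos (β : ℤ → R) (s : Finset ℤ) {j : ℤ} (hj : 0 < j) :
    (∏ i ∈ s, (single (-1 : ℤ) (1 : R) - C (β i))).coeff j = 0 := by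
  refine Finset.prod_induction _ (fun x : LaurentSeries R => ∀ j : ℤ, 0 < j → x.coeff j = 0)
    (fun _ _ hx hy _ => coeff_mul_eq_zero_of_forall_pos hx hy) ?_ ?_ j hj
  · intro j hj
    rw [HahnSeries.coeff_one, if_neg hj.ne']
  · intro i _ j hj
    rw [coeff_sub, HahnSeries.C_apply, coeff_single_of_ne (by omega),
      coeff_single_of_ne (by omega), sub_zero]

theorem single_neg_one_sub_C_mul_geom (a : R) :
    (single (-1 : ℤ) (1 : R) - C a) *
      ofPowerSeries ℤ R (PowerSeries.X * PowerSeries.rescale a (PowerSeries.mk 1)) = 1 := by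
  have hgeom :
      (1 - PowerSeries.C a * PowerSeries.X) * PowerSeries.rescale a (PowerSeries.mk 1) = 1 := by
    rw [← PowerSeries.rescale_X, ← map_one (PowerSeries.rescale a), ← map_sub, ← map_mul, mul_comm,
      PowerSeries.mk_one_mul_one_sub_eq_one, map_one]
  calc (single (-1 : ℤ) (1 : R) - C a) *
        ofPowerSeries ℤ R (PowerSeries.X * PowerSeries.rescale a (PowerSeries.mk 1))
      = (single (-1 : ℤ) (1 : R) - C a) * single 1 1 *
          ofPowerSeries ℤ R (PowerSeries.rescale a (PowerSeries.mk 1)) := by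
        rw [map_mul, ofPowerSeries_X, mul_assoc]
    _ = ofPowerSeries ℤ R
          ((1 - PowerSeries.C a * PowerSeries.X) * PowerSeries.rescale a (PowerSeries.mk 1)) := by
        rw [sub_mul, single_mul_single]
        simp [ofPowerSeries_C, ofPowerSeries_X]
    _ = 1 := by rw [hgeom, map_one]

theorem inverse_single_neg_one_sub_C (a : R) :
    Ring.inverse (single (-1 : ℤ) (1 : R) - C a) =
      ofPowerSeries ℤ R (PowerSeries.X * PowerSeries.rescale a (PowerSeries.mk 1)) := by
  have h := single_neg_one_sub_C_mul_geom a
  simpa using (Ring.inverse_mul_eq_iff_eq_mul _ 1 _ (.of_mul_eq_one _ h)).mpr h.symm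

theorem spow_of_neg (β : ℤ → R) {m : ℤ} (hm : m < 0) :
    spow β m = ofPowerSeries ℤ R (PowerSeries.X ^ (-m).toNat *
      ∏ i ∈ Finset.Icc (m + 1) 0, PowerSeries.rescale (β i) (PowerSeries.mk 1)) := by
  rw [spow, if_neg hm.not_ge]
  simp only [inverse_single_neg_one_sub_C, ← map_prod, Finset.prod_mul_distrib,
    Finset.prod_const, Int.card_Icc]
  congr 3
  omega

theorem coeff_one_spow (β : ℤ → R) (m : ℤ) :
    (spow β m).coeff 1 = if m = -1 then 1 else 0 := by
  rcases le_or_gt 0 m with hm | hm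
  · rw [spow, if_pos hm, if_neg (by omega)]
    exact coeff_prod_single_neg_one_sub_C_of_pos β _ one_pos
  · have hcoeff : (spow β m).coeff 1 = PowerSeries.coeff 1 (PowerSeries.X ^ (-m).toNat *
        ∏ i ∈ Finset.Icc (m + 1) 0, PowerSeries.rescale (β i) (PowerSeries.mk 1)) := by
      rw [spow_of_neg β hm]
      exact ofPowerSeries_apply_coeff _ 1
    rw [hcoeff, PowerSeries.coeff_X_pow_mul']
    split_ifs with hle hm₁ hm₁
    · rw [show 1 - (-m).toNat = 0 by omega, PowerSeries.coeff_zero_eq_constantCoeff, map_prod]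
      exact Finset.prod_eq_one fun i _ => by simp [PowerSeries.rescale_mk]
    · omega
    · omega
    · rfl

/-- Proposition 2.3 (orthonormality): the coefficient of `z^1` in `(z⁻¹|σ^k α)^{n−k−1}`
equals `δ_{nk}`, i.e. `∮ (z⁻¹|σ^k α)^{n−k−1} dz/(2πi z²) = δ_{nk}`.
Here `(σ^k α)_i = α_{i+k}`. -/
theorem shifted_power_orthonormality (α : ℤ → R) (n k : ℤ) :
    (spow (fun i => α (i + k)) (n - k - 1)).coeff 1 = if n = k then 1 else 0 := by
  rw [coeff_one_spow]
  exact if_congr (by omega) rfl rfl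
end

section
/- Assume (i,j) ∈ T. Then: (i) if (C,D) ∈ Ω_C(i,j) is not exceptional, then (i−1, j) ∈ T and L_C(C,D) ∈ Ω(i−1, j); (ii) if (C,D) ∈ Ω_D(i,j) and i < 0, then (i+1, j) ∈ T and L_D(C,D) ∈ Ω(i+1, j); (iii) if (C,D) ∈ Ω^C(i,j) is not exceptional, then (i, j+1) ∈ T and L^C(C,D) ∈ Ω(i, j+1); (iv) if (C,D) ∈ Ω^D(i,j) and j > 1, then (i, j−1) ∈ T and L^D(C,D) ∈ Ω(i, j−1). -/
/-- The index set `T = {(i,j) : 1 ≤ j ≤ ℓ, j − ℓ ≤ i ≤ min(0, j − k)}`. -/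
def T (k l : ℤ) : Set (ℤ × ℤ) :=
  {p | 1 ≤ p.2 ∧ p.2 ≤ l ∧ p.2 - l ≤ p.1 ∧ p.1 ≤ min 0 (p.2 - k)}

/-- `(C, D) ∈ Ω(i,j)`: `C` is a multiset of integers of cardinality `i − j + ℓ` with all
elements in `[i, j]`, and `D` is a finite set of integers of cardinality `j − i − k` with all
elements in `(i, j)`. -/
def Omega (k l i j : ℤ) (C : Multiset ℤ) (D : Finset ℤ) : Prop :=
  ((Multiset.card C : ℤ) = i - j + l ∧ ∀ c ∈ C, i ≤ c ∧ c ≤ j) ∧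
    ((D.card : ℤ) = j - i - k ∧ ∀ d ∈ D, i < d ∧ d < j)

/-- `(C, D) ∈ Ω_C`: `C` is nonempty and either `D` is empty or `min C < min D`
(expressed as: some element of `C` is strictly below every element of `D`). -/
def OmegaLC (C : Multiset ℤ) (D : Finset ℤ) : Prop :=
  C ≠ 0 ∧ ∃ c ∈ C, ∀ d ∈ D, c < d

/-- `(C, D) ∈ Ω_D`: `D` is nonempty and either `C` is empty or `min D ≤ min C`
(expressed as: some element of `D` is below every element of `C`). -/
def OmegaLD (C : Multiset ℤ) (D : Finset ℤ) : Prop :=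
  D.Nonempty ∧ ∃ d ∈ D, ∀ c ∈ C, d ≤ c

/-- `(C, D) ∈ Ω^C`: `C` is nonempty and either `D` is empty or `max C > max D`
(expressed as: some element of `C` is strictly above every element of `D`). -/
def OmegaUC (C : Multiset ℤ) (D : Finset ℤ) : Prop :=
  C ≠ 0 ∧ ∃ c ∈ C, ∀ d ∈ D, d < c

/-- `(C, D) ∈ Ω^D`: `D` is nonempty and either `C` is empty or `max D ≥ max C`
(expressed as: some element of `D` is above every element of `C`). -/
def OmegaUD (C : Multiset ℤ) (D : Finset ℤ) : Prop :=
  D.Nonempty ∧ ∃ d ∈ D, ∀ c ∈ C, c ≤ d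

/-- `(C, D) ∈ Ω_C(i,j)` is exceptional if `D = ∅` and every element of `C` equals `j`. -/
def ExceptionalLC (j : ℤ) (C : Multiset ℤ) (D : Finset ℤ) : Prop :=
  D = ∅ ∧ ∀ c ∈ C, c = j

/-- `(C, D) ∈ Ω^C(i,j)` is exceptional if `D = ∅` and every element of `C` equals `i`. -/
def ExceptionalUC (i : ℤ) (C : Multiset ℤ) (D : Finset ℤ) : Prop :=
  D = ∅ ∧ ∀ c ∈ C, c = i

/-- Lemma 2.5.1: for `(i,j) ∈ T` and `(C,D) ∈ Ω(i,j)`: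
(i) if `(C,D) ∈ Ω_C(i,j)` is not exceptional, then `(i−1,j) ∈ T` and
  `L_C(C,D) ∈ Ω(i−1,j)`, where `L_C` moves the minimal element of `C` into `D`;
(ii) if `(C,D) ∈ Ω_D(i,j)` and `i < 0`, then `(i+1,j) ∈ T` and `L_D(C,D) ∈ Ω(i+1,j)`,
  where `L_D` moves the minimal element of `D` into `C`;
(iii) if `(C,D) ∈ Ω^C(i,j)` is not exceptional, then `(i,j+1) ∈ T` and
  `L^C(C,D) ∈ Ω(i,j+1)`, where `L^C` moves the maximal element of `C` into `D`;
(iv) if `(C,D) ∈ Ω^D(i,j)` and `j > 1`, then `(i,j−1) ∈ T` and `L^D(C,D) ∈ Ω(i,j−1)`,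
  where `L^D` moves the maximal element of `D` into `C`. -/
theorem firstinv (k l : ℤ) (hk : 0 < k) (hkl : k ≤ l) (i j : ℤ) (hT : (i, j) ∈ T k l)
    (C : Multiset ℤ) (D : Finset ℤ) (hCD : Omega k l i j C D) :
    (OmegaLC C D → ¬ ExceptionalLC j C D →
        (i - 1, j) ∈ T k l ∧
          ∀ c ∈ C, (∀ c' ∈ C, c ≤ c') →
            Omega k l (i - 1) j (C.erase c) (insert c D)) ∧
      (OmegaLD C D → i < 0 →
        (i + 1, j) ∈ T k l ∧
          ∀ d ∈ D, (∀ d' ∈ D, d ≤ d') →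
            Omega k l (i + 1) j (d ::ₘ C) (D.erase d)) ∧
      (OmegaUC C D → ¬ ExceptionalUC i C D →
        (i, j + 1) ∈ T k l ∧
          ∀ c ∈ C, (∀ c' ∈ C, c' ≤ c) →
            Omega k l i (j + 1) (C.erase c) (insert c D)) ∧
      (OmegaUD C D → 1 < j →
        (i, j - 1) ∈ T k l ∧
          ∀ d ∈ D, (∀ d' ∈ D, d' ≤ d) →
            Omega k l i (j - 1) (d ::ₘ C) (D.erase d)) := by
  obtain ⟨hj1, hjl, hil, hi⟩ := hT
  rw [le_min_iff] at hi
  obtain ⟨hi0, hik⟩ := hi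
  obtain ⟨⟨hCcard, hC⟩, hDcard, hD⟩ := hCD
  refine ⟨?_, ?_, ?_, ?_⟩
  · rintro ⟨hC0, c₀, hc₀C, hc₀⟩ hexc
    have hCpos : 0 < Multiset.card C := Multiset.card_pos.mpr hC0
    refine ⟨⟨hj1, hjl, by omega, le_min (by omega) (by omega)⟩, ?_⟩
    intro c hcC hcmin
    have hcd : ∀ d ∈ D, c < d := fun d hd => lt_of_le_of_lt (hcmin c₀ hc₀C) (hc₀ d hd)
    have hcD : c ∉ D := fun h => lt_irrefl c (hcd c h)
    have hcj : c < j := by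
      by_cases hDe : D = ∅
      · simp only [ExceptionalLC, hDe, true_and, not_forall] at hexc
        obtain ⟨c', hc'C, hc'⟩ := hexc
        have h1 := (hC c' hc'C).2
        have h2 := hcmin c' hc'C
        omega
      · obtain ⟨d, hd⟩ := Finset.nonempty_iff_ne_empty.mpr hDe
        have h1 := (hD d hd).2
        have h2 := hcd d hd
        omega
    have hci := (hC c hcC).1
    refine ⟨⟨?_, ?_⟩, ?_, ?_⟩
    · have h := Multiset.card_erase_of_mem hcC
      rw [Nat.pred_eq_sub_one] at h
      omega
    · intro x hx
      have := hC x (Multiset.mem_of_mem_erase hx)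
      omega
    · rw [Finset.card_insert_of_notMem hcD]
      push_cast
      omega
    · intro x hx
      rcases Finset.mem_insert.mp hx with rfl | h
      · omega
      · have := hD x h
        omega
  · rintro ⟨hDne, d₀, hd₀D, hd₀⟩ hineg
    have hDpos : 0 < D.card := Finset.Nonempty.card_pos hDne
    refine ⟨⟨hj1, hjl, by omega, le_min (by omega) (by omega)⟩, ?_⟩
    intro d hdD hdmin
    have hdij := hD d hdD
    refine ⟨⟨?_, ?_⟩, ?_, ?_⟩
    · rw [Multiset.card_cons]
      push_cast
      omega
    · intro x hx
      rcases Multiset.mem_cons.mp hx with rfl | h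
      · omega
      · have h1 := hd₀ x h
        have h2 := hdmin d₀ hd₀D
        have h3 := (hC x h).2
        omega
    · have h := Finset.card_erase_of_mem hdD
      omega
    · intro x hx
      have h1 := hdmin x (Finset.mem_of_mem_erase hx)
      have h2 := Finset.ne_of_mem_erase hx
      have h3 := (hD x (Finset.mem_of_mem_erase hx)).2
      omega
  · rintro ⟨hC0, c₀, hc₀C, hc₀⟩ hexc
    have hCpos : 0 < Multiset.card C := Multiset.card_pos.mpr hC0
    refine ⟨⟨by omega, by omega, by omega, le_min (by omega) (by omega)⟩, ?_⟩
    intro c hcC hcmax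
    have hcd : ∀ d ∈ D, d < c := fun d hd => lt_of_lt_of_le (hc₀ d hd) (hcmax c₀ hc₀C)
    have hcD : c ∉ D := fun h => lt_irrefl c (hcd c h)
    have hci : i < c := by
      by_cases hDe : D = ∅
      · simp only [ExceptionalUC, hDe, true_and, not_forall] at hexc
        obtain ⟨c', hc'C, hc'⟩ := hexc
        have h1 := (hC c' hc'C).1
        have h2 := hcmax c' hc'C
        omega
      · obtain ⟨d, hd⟩ := Finset.nonempty_iff_ne_empty.mpr hDe
        have h1 := (hD d hd).1
        have h2 := hcd d hd
        omega
    have hcj := (hC c hcC).2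
    refine ⟨⟨?_, ?_⟩, ?_, ?_⟩
    · have h := Multiset.card_erase_of_mem hcC
      rw [Nat.pred_eq_sub_one] at h
      omega
    · intro x hx
      have := hC x (Multiset.mem_of_mem_erase hx)
      omega
    · rw [Finset.card_insert_of_notMem hcD]
      push_cast
      omega
    · intro x hx
      rcases Finset.mem_insert.mp hx with rfl | h
      · omega
      · have := hD x h
        omega
  · rintro ⟨hDne, d₀, hd₀D, hd₀⟩ hj2
    have hDpos : 0 < D.card := Finset.Nonempty.card_pos hDne
    refine ⟨⟨by omega, by omega, by omega, le_min (by omega) (by omega)⟩, ?_⟩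
    intro d hdD hdmax
    have hdij := hD d hdD
    refine ⟨⟨?_, ?_⟩, ?_, ?_⟩
    · rw [Multiset.card_cons]
      push_cast
      omega
    · intro x hx
      rcases Multiset.mem_cons.mp hx with rfl | h
      · omega
      · have h1 := hd₀ x h
        have h2 := hdmax d₀ hd₀D
        have h3 := (hC x h).1
        omega
    · have h := Finset.card_erase_of_mem hdD
      omega
    · intro x hx
      have h1 := hdmax x (Finset.mem_of_mem_erase hx)
      have h2 := Finset.ne_of_mem_erase hx
      have h3 := (hD x (Finset.mem_of_mem_erase hx)).1
      omega
end
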